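/- Let $R$ be a commutative ring with a pre-λ structure, with plethystic exponential $\mathrm{Exp}$ and logarithm $\mathrm{Log}$ on $R[[z_1,\ldots,z_n]]^+$. Define $(A(z))^m := \mathrm{Exp}(m \cdot \mathrm{Log}(A(z)))$ for $A(z) \in 1 + R[[z_1,\ldots,z_n]]^+$ and $m \in R$. Then this defines a power structure on $R$: (i) $A^0 = 1$; (ii) $A^1 = A$; (iii) $(AB)^m = A^m B^m$; (iv) $A^{m_1+m_2} = A^{m_1}A^{m_2}$; (v) $A^{m_1 m_2} = (A^{m_2})^{m_1}$; (vi) $(1+\sum_i z_i)^m = 1 + m\sum_i z_i + (\text{terms of total degree} \geq 2)$. -/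

import Mathlib

/-- A pre-λ structure on a commutative ring `A`. -/
structure PreLambda (A : Type*) [CommRing A] where
  toFun : A → PowerSeries A
  map_zero' : toFun 0 = 1
  map_add' : ∀ a b : A, toFun (a + b) = toFun a * toFun b
  coeff_zero' : ∀ a : A, PowerSeries.coeff 0 (toFun a) = 1
  coeff_one' : ∀ a : A, PowerSeries.coeff 1 (toFun a) = a

/-- Substitution of (minus) a monomial `z^r = ∏ z_i^{r i}` into a one-variable power series:
`g(z) ↦ g(-z^r)`, as a multivariate power series.  For `r ≠ 0` the exponent `m` with
`d = m • r` (if any) is unique and bounded by the total degree of `d`. -/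
noncomputable def monSubstNeg {σ : Type*} [DecidableEq σ] {A : Type*} [CommRing A]
    (r : σ →₀ ℕ) (g : PowerSeries A) : MvPowerSeries σ A :=
  fun d => ∑ m ∈ Finset.range (d.sum (fun _ v => v) + 1),
    if d = m • r then (-1 : A) ^ m * PowerSeries.coeff m g else 0

/-- The multivariable plethystic exponential
`Exp (∑_{r ≠ 0} A_r z^r) = ∏_{r ≠ 0} λ⁻¹_{A_r}(-z^r)`.
Since `λ⁻¹_{A_r} = λ_{-A_r}`, and since the factor indexed by `r` contributes to the
coefficient at a multidegree `d` only when `r ≤ d`, the coefficient at `d` equals the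
corresponding coefficient of the finite product over `0 < r ≤ d`. -/
noncomputable def mvExp {σ : Type*} [DecidableEq σ] {A : Type*} [CommRing A]
    (L : PreLambda A) (f : MvPowerSeries σ A) : MvPowerSeries σ A :=
  fun d => MvPowerSeries.coeff d
    (∏ r ∈ (Finset.Iic d).erase 0, monSubstNeg r (L.toFun (-(MvPowerSeries.coeff r f))))


/-!
Each factor `λ_{-a}(-z^r)` of `Exp` is the image of a one-variable series under the substitution
`t ↦ -z^r`, which is a ring homomorphism for `r ≠ 0`; since `λ` sends sums to products, so does
every factor, and hence so does `Exp` — coefficientwise, because a factor with `r ≰ e` agrees with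
`1` in all degrees `≤ e`, so the coefficient at `e` may be read off any finite product over a
superset of `0 < r ≤ e`. As `Log` inverts `Exp`, it sends products to sums and series with
constant term `1` to series with constant term `0`; the axioms (i)–(v) then reduce to linearity of
`m • Log A`. For (vi), the only factor contributing to the coefficient of `zᵢ` is the one with
`r = eᵢ`, so `Exp`, and with it `Log`, preserves the coefficients of the `zᵢ`.
-/

namespace MvPowerSeries

variable {σ R ι : Type*} [CommSemiring R]

theorem coeff_mul_eq_coeff_right {e : σ →₀ ℕ} {f : MvPowerSeries σ R}
    (hf : ∀ u ≤ e, coeff u f = coeff u 1) (g : MvPowerSeries σ R) :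
    coeff e (f * g) = coeff e g := by
  classical
  conv_rhs => rw [← one_mul g]
  rw [coeff_mul, coeff_mul]
  refine Finset.sum_congr rfl fun p hp => ?_
  rw [hf p.1 (Finset.HasAntidiagonal.antidiagonal.fst_le hp)]

theorem coeff_prod_eq_coeff_one {e : σ →₀ ℕ} {F : ι → MvPowerSeries σ R} {s : Finset ι}
    (h : ∀ i ∈ s, ∀ u ≤ e, coeff u (F i) = coeff u 1) :
    ∀ u ≤ e, coeff u (∏ i ∈ s, F i) = coeff u 1 := by
  classical
  induction s using Finset.induction_on with
  | empty => simp
  | insert a s ha ih =>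
    intro u hu
    rw [Finset.prod_insert ha, coeff_mul_eq_coeff_right
      (fun v hv => h a (Finset.mem_insert_self a s) v (hv.trans hu))]
    exact ih (fun i hi => h i (Finset.mem_insert_of_mem hi)) u hu

theorem coeff_prod_eq_coeff_prod_of_subset {e : σ →₀ ℕ} {F : ι → MvPowerSeries σ R}
    [DecidableEq ι] {s t : Finset ι} (hts : t ⊆ s)
    (h : ∀ i ∈ s \ t, ∀ u ≤ e, coeff u (F i) = coeff u 1) :
    coeff e (∏ i ∈ s, F i) = coeff e (∏ i ∈ t, F i) := by
  rw [← Finset.prod_sdiff hts, coeff_mul_eq_coeff_right (coeff_prod_eq_coeff_one h)]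

end MvPowerSeries

namespace Finsupp

variable {σ : Type*}

theorem degree_pos {r : σ →₀ ℕ} (hr : r ≠ 0) : 0 < r.degree :=
  Nat.pos_of_ne_zero ((degree_eq_zero_iff r).not.mpr hr)

theorem le_degree_nsmul {r : σ →₀ ℕ} (hr : r ≠ 0) (m : ℕ) : m ≤ (m • r).degree := by
  rw [map_nsmul, smul_eq_mul]
  exact Nat.le_mul_of_pos_right m (degree_pos hr)

theorem nsmul_eq_self_iff {r : σ →₀ ℕ} (hr : r ≠ 0) {m : ℕ} : m • r = r ↔ m = 1 := by
  refine ⟨fun h => ?_, fun h => by rw [h, one_smul]⟩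
  have hdeg := congrArg degree h
  rw [map_nsmul, smul_eq_mul] at hdeg
  exact (Nat.mul_eq_right (degree_pos hr).ne').mp hdeg

theorem eq_of_le_of_degree_le {r s : σ →₀ ℕ} (hrs : r ≤ s) (hdeg : s.degree ≤ r.degree) :
    r = s := by
  have hsplit : s.degree = r.degree + (s - r).degree := by
    rw [← map_add, add_tsub_cancel_of_le hrs]
  have hzero : s - r = 0 := (degree_eq_zero_iff _).mp (by omega)
  exact le_antisymm hrs (tsub_eq_zero_iff_le.mp hzero)

theorem erase_zero_Iic_single [DecidableEq σ] (i : σ) :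
    (Finset.Iic (single i 1)).erase 0 = {single i 1} := by
  ext r
  simp only [Finset.mem_erase, Finset.mem_Iic, Finset.mem_singleton]
  refine ⟨fun ⟨hr, hle⟩ => eq_of_le_of_degree_le hle ?_, ?_⟩
  · rw [degree_single]
    exact degree_pos hr
  · rintro rfl
    exact ⟨single_ne_zero.mpr one_ne_zero, le_rfl⟩

end Finsupp

open MvPowerSeries

section

variable {σ : Type*} [DecidableEq σ] {A : Type*} [CommRing A]

theorem hasSubst_monomial {r : σ →₀ ℕ} (hr : r ≠ 0) (a : A) :
    PowerSeries.HasSubst (monomial r a : MvPowerSeries σ A) :=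
  .of_constantCoeff_zero <| by
    rw [← coeff_zero_eq_constantCoeff_apply, coeff_monomial, if_neg hr.symm]

theorem monSubstNeg_eq_subst {r : σ →₀ ℕ} (hr : r ≠ 0) (g : PowerSeries A) :
    monSubstNeg r g = g.subst (monomial r (-1) : MvPowerSeries σ A) := by
  ext d
  rw [PowerSeries.coeff_subst (hasSubst_monomial hr _),
    finsum_eq_sum_of_support_subset (s := Finset.range (d.degree + 1)) _ ?support]
  case support =>
    intro m hm
    rw [Function.mem_support, monomial_pow, coeff_monomial] at hm
    obtain rfl : d = m • r := of_not_not fun h => hm (by simp [h])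
    simpa [Nat.lt_succ_iff] using Finsupp.le_degree_nsmul hr m
  show ∑ m ∈ Finset.range (d.degree + 1), _ = _
  refine Finset.sum_congr rfl fun m _ => ?_
  rw [monomial_pow, coeff_monomial]
  split_ifs <;> simp [mul_comm]

theorem monSubstNeg_one {r : σ →₀ ℕ} (hr : r ≠ 0) : monSubstNeg r (1 : PowerSeries A) = 1 := by
  rw [monSubstNeg_eq_subst hr, ← PowerSeries.coe_substAlgHom (hasSubst_monomial hr _), map_one]

theorem monSubstNeg_mul {r : σ →₀ ℕ} (hr : r ≠ 0) (g h : PowerSeries A) :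
    monSubstNeg r (g * h) = monSubstNeg r g * monSubstNeg r h := by
  simp only [monSubstNeg_eq_subst hr, PowerSeries.subst_mul (hasSubst_monomial hr _)]

theorem coeff_monSubstNeg_self {r : σ →₀ ℕ} (hr : r ≠ 0) (g : PowerSeries A) :
    coeff r (monSubstNeg r g) = -PowerSeries.coeff 1 g := by
  rw [monSubstNeg_eq_subst hr, PowerSeries.coeff_subst (hasSubst_monomial hr _),
    finsum_eq_single _ 1 fun m hm => ?_]
  · simp
  · rw [monomial_pow, coeff_monomial, if_neg fun h => hm ((Finsupp.nsmul_eq_self_iff hr).mp h.symm),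
      smul_zero]

theorem coeff_monSubstNeg_of_not_le {r u : σ →₀ ℕ} (hru : ¬ r ≤ u) (g : PowerSeries A) :
    coeff u (monSubstNeg r g) = PowerSeries.coeff 0 g * coeff u 1 := by
  have hr : r ≠ 0 := by rintro rfl; exact hru zero_le
  rw [monSubstNeg_eq_subst hr, PowerSeries.coeff_subst (hasSubst_monomial hr _),
    finsum_eq_single _ 0 fun m hm => ?_]
  · simp
  · rw [monomial_pow, coeff_monomial, if_neg, smul_zero]
    rintro rfl
    exact hru (le_self_nsmul zero_le hm)

variable (L : PreLambda A)

noncomputable def mvExpFactor (f : MvPowerSeries σ A) (r : σ →₀ ℕ) : MvPowerSeries σ A :=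
  monSubstNeg r (L.toFun (-coeff r f))

theorem coeff_mvExp (f : MvPowerSeries σ A) (d : σ →₀ ℕ) :
    coeff d (mvExp L f) = coeff d (∏ r ∈ (Finset.Iic d).erase 0, mvExpFactor L f r) :=
  rfl

theorem mvExpFactor_add {r : σ →₀ ℕ} (hr : r ≠ 0) (f g : MvPowerSeries σ A) :
    mvExpFactor L (f + g) r = mvExpFactor L f r * mvExpFactor L g r := by
  rw [mvExpFactor, map_add, neg_add, L.map_add', monSubstNeg_mul hr, mvExpFactor, mvExpFactor]

theorem mvExpFactor_C {r : σ →₀ ℕ} (hr : r ≠ 0) (c : A) : mvExpFactor L (C c) r = 1 := by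
  rw [mvExpFactor, coeff_C, if_neg hr, neg_zero, L.map_zero', monSubstNeg_one hr]

theorem coeff_mvExpFactor_self {r : σ →₀ ℕ} (hr : r ≠ 0) (f : MvPowerSeries σ A) :
    coeff r (mvExpFactor L f r) = coeff r f := by
  rw [mvExpFactor, coeff_monSubstNeg_self hr, L.coeff_one', neg_neg]

theorem coeff_mvExpFactor_of_not_le {r u : σ →₀ ℕ} (hru : ¬ r ≤ u) (f : MvPowerSeries σ A) :
    coeff u (mvExpFactor L f r) = coeff u 1 := by
  rw [mvExpFactor, coeff_monSubstNeg_of_not_le hru, L.coeff_zero', one_mul]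

theorem coeff_mvExp_of_le {e d : σ →₀ ℕ} (hed : e ≤ d) (f : MvPowerSeries σ A) :
    coeff e (mvExp L f) = coeff e (∏ r ∈ (Finset.Iic d).erase 0, mvExpFactor L f r) := by
  refine (coeff_prod_eq_coeff_prod_of_subset ?_ fun r hr u hue => ?_).symm
  · exact Finset.erase_subset_erase 0 (Finset.Iic_subset_Iic.mpr hed)
  · simp only [Finset.mem_sdiff, Finset.mem_erase, Finset.mem_Iic] at hr
    exact coeff_mvExpFactor_of_not_le L (fun hru => hr.2 ⟨hr.1.1, hru.trans hue⟩) f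

theorem mvExp_add (f g : MvPowerSeries σ A) : mvExp L (f + g) = mvExp L f * mvExp L g := by
  ext d
  calc coeff d (mvExp L (f + g))
      = coeff d ((∏ r ∈ (Finset.Iic d).erase 0, mvExpFactor L f r) *
          ∏ r ∈ (Finset.Iic d).erase 0, mvExpFactor L g r) := by
        rw [coeff_mvExp, ← Finset.prod_mul_distrib,
          Finset.prod_congr rfl fun r hr => mvExpFactor_add L (Finset.ne_of_mem_erase hr) f g]
    _ = coeff d (mvExp L f * mvExp L g) := by
        rw [coeff_mul, coeff_mul]
        refine Finset.sum_congr rfl fun p hp => ?_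
        rw [coeff_mvExp_of_le L (Finset.HasAntidiagonal.antidiagonal.fst_le hp),
          coeff_mvExp_of_le L (Finset.HasAntidiagonal.antidiagonal.snd_le hp)]

theorem mvExp_C (c : A) : mvExp L (C c : MvPowerSeries σ A) = 1 := by
  ext d
  rw [coeff_mvExp, Finset.prod_eq_one fun r hr => mvExpFactor_C L (Finset.ne_of_mem_erase hr) c]

theorem mvExp_zero : mvExp L (0 : MvPowerSeries σ A) = 1 := by
  simpa using mvExp_C (σ := σ) L 0

theorem constantCoeff_mvExp (f : MvPowerSeries σ A) : constantCoeff (mvExp L f) = 1 := by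
  rw [← coeff_zero_eq_constantCoeff_apply, coeff_mvExp, ← bot_eq_zero, Finset.Iic_bot,
    Finset.erase_singleton, Finset.prod_empty, coeff_one, if_pos bot_eq_zero]

theorem coeff_single_mvExp (f : MvPowerSeries σ A) (i : σ) :
    coeff (Finsupp.single i 1) (mvExp L f) = coeff (Finsupp.single i 1) f := by
  rw [coeff_mvExp, Finsupp.erase_zero_Iic_single, Finset.prod_singleton,
    coeff_mvExpFactor_self L (Finsupp.single_ne_zero.mpr one_ne_zero)]

section Log

variable {L : PreLambda A} {Log : MvPowerSeries σ A → MvPowerSeries σ A}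

theorem constantCoeff_log_eq_zero
    (hLog₁ : ∀ f, constantCoeff f = 0 → Log (mvExp L f) = f)
    (hLog₂ : ∀ g, constantCoeff g = 1 → mvExp L (Log g) = g)
    {g : MvPowerSeries σ A} (hg : constantCoeff g = 1) : constantCoeff (Log g) = 0 := by
  have hshift : Log g + C (-constantCoeff (Log g)) = Log g := by
    calc Log g + C (-constantCoeff (Log g))
        = Log (mvExp L (Log g + C (-constantCoeff (Log g)))) := (hLog₁ _ (by simp)).symm
      _ = Log g := by rw [mvExp_add, mvExp_C, mul_one, hLog₂ g hg]
  simpa [eq_comm] using congrArg constantCoeff hshift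

theorem log_mul
    (hLog₁ : ∀ f, constantCoeff f = 0 → Log (mvExp L f) = f)
    (hLog₂ : ∀ g, constantCoeff g = 1 → mvExp L (Log g) = g)
    {g h : MvPowerSeries σ A} (hg : constantCoeff g = 1) (hh : constantCoeff h = 1) :
    Log (g * h) = Log g + Log h := by
  conv_lhs => rw [← hLog₂ g hg, ← hLog₂ h hh, ← mvExp_add]
  exact hLog₁ _ (by
    rw [map_add, constantCoeff_log_eq_zero hLog₁ hLog₂ hg,
      constantCoeff_log_eq_zero hLog₁ hLog₂ hh, add_zero])

end Log

end

open MvPowerSeries in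
/-- The map `(A, m) ↦ A^m := Exp (m • Log A)` is a power structure on a pre-λ-ring `R`:
(i) `A⁰ = 1`; (ii) `A¹ = A`; (iii) `(AB)^m = A^m B^m`; (iv) `A^{m₁+m₂} = A^{m₁} A^{m₂}`;
(v) `A^{m₁ m₂} = (A^{m₂})^{m₁}`; (vi) `(1 + ∑ᵢ zᵢ)^m = 1 + m ∑ᵢ zᵢ + (degree ≥ 2)`. -/
theorem statement4 {n : ℕ} {R : Type*} [CommRing R] (L : PreLambda R)
    (Log : MvPowerSeries (Fin n) R → MvPowerSeries (Fin n) R)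
    (hLog₁ : ∀ f : MvPowerSeries (Fin n) R, constantCoeff f = 0 →
      Log (mvExp L f) = f)
    (hLog₂ : ∀ g : MvPowerSeries (Fin n) R, constantCoeff g = 1 →
      mvExp L (Log g) = g)
    (pow : MvPowerSeries (Fin n) R → R → MvPowerSeries (Fin n) R)
    (hpow : ∀ A m, pow A m = mvExp L (m • Log A)) :
    (∀ A : MvPowerSeries (Fin n) R, constantCoeff A = 1 → pow A 0 = 1) ∧
    (∀ A : MvPowerSeries (Fin n) R, constantCoeff A = 1 → pow A 1 = A) ∧
    (∀ (A B : MvPowerSeries (Fin n) R) (m : R), constantCoeff A = 1 →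
      constantCoeff B = 1 → pow (A * B) m = pow A m * pow B m) ∧
    (∀ (A : MvPowerSeries (Fin n) R) (m₁ m₂ : R), constantCoeff A = 1 →
      pow A (m₁ + m₂) = pow A m₁ * pow A m₂) ∧
    (∀ (A : MvPowerSeries (Fin n) R) (m₁ m₂ : R), constantCoeff A = 1 →
      pow A (m₁ * m₂) = pow (pow A m₂) m₁) ∧
    (∀ m : R,
      constantCoeff (pow (1 + ∑ i : Fin n, MvPowerSeries.X i) m) = 1 ∧
      ∀ i : Fin n, MvPowerSeries.coeff (Finsupp.single i 1)
        (pow (1 + ∑ i : Fin n, MvPowerSeries.X i) m) = m) := by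
  refine ⟨fun A _ => ?_, fun A hA => ?_, fun A B m hA hB => ?_, fun A m₁ m₂ _ => ?_,
    fun A m₁ m₂ hA => ?_, fun m => ⟨?_, fun i => ?_⟩⟩
  · rw [hpow, zero_smul, mvExp_zero]
  · rw [hpow, one_smul, hLog₂ A hA]
  · rw [hpow, hpow, hpow, log_mul hLog₁ hLog₂ hA hB, smul_add, mvExp_add]
  · rw [hpow, hpow, hpow, add_smul, mvExp_add]
  · rw [hpow, hpow, hpow, hLog₁ _ (by simp [constantCoeff_log_eq_zero hLog₁ hLog₂ hA]),
      smul_smul]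
  · rw [hpow, constantCoeff_mvExp]
  · have hA₀ : constantCoeff (1 + ∑ j : Fin n, X j : MvPowerSeries (Fin n) R) = 1 := by simp
    have hlin : coeff (Finsupp.single i 1) (Log (1 + ∑ j : Fin n, X j)) = 1 := by
      rw [← coeff_single_mvExp L, hLog₂ _ hA₀]
      simp [coeff_X, coeff_one, Finsupp.single_left_inj one_ne_zero]
    rw [hpow, coeff_single_mvExp, map_smul, hlin, smul_eq_mul, mul_one]
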